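/- Reciprocal clustering satisfies the Axiom of Transformation: if φ : X → Y is a dissimilarity-reducing map between networks (X, A_X) and (Y, A_Y), i.e., A_X(x,x') ≥ A_Y(φ(x), φ(x')) for all x, x' ∈ X, then u^R_X(x,x') ≥ u^R_Y(φ(x), φ(x')) for all x, x' ∈ X. -/

import Mathlib

/-- Maximum dissimilarity over consecutive links of a chain (list of nodes). -/
def listCost {X : Type*} (A : X → X → ℝ) (l : List X) : ℝ :=
  (l.zip l.tail).foldr (fun p r => max (A p.1 p.2) r) 0

/-- Minimum over chains from `x` to `x'` of the maximum link cost. -/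
noncomputable def minChainCost {X : Type*} (A : X → X → ℝ) (x x' : X) : ℝ :=
  sInf {c : ℝ | ∃ l : List X, l.head? = some x ∧ l.getLast? = some x' ∧ listCost A l = c}

/-- Symmetrized dissimilarity Ā. -/
def symDis {X : Type*} (A : X → X → ℝ) (x x' : X) : ℝ := max (A x x') (A x' x)

/-- Reciprocal ultrametric. -/
noncomputable def uR {X : Type*} (A : X → X → ℝ) (x x' : X) : ℝ := minChainCost (symDis A) x x'

/-- Nonreciprocal ultrametric. -/
noncomputable def uNR {X : Type*} (A : X → X → ℝ) (x x' : X) : ℝ :=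
  max (minChainCost A x x') (minChainCost A x' x)

/-- A (finite, asymmetric) network dissimilarity: nonnegative, vanishing exactly on the diagonal. -/
def IsNetwork {X : Type*} (A : X → X → ℝ) : Prop :=
  (∀ x x', 0 ≤ A x x') ∧ (∀ x x', A x x' = 0 ↔ x = x')

/-- Ultrametric: nonnegative, symmetric, identity of indiscernibles, strong triangle inequality. -/
def IsUltra {X : Type*} (u : X → X → ℝ) : Prop :=
  (∀ x x', 0 ≤ u x x') ∧ (∀ x x', u x x' = u x' x) ∧
  (∀ x x', u x x' = 0 ↔ x = x') ∧
  (∀ x x' x'', u x x' ≤ max (u x x'') (u x'' x'))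

section

variable {X Y : Type*}

lemma listCost_nonneg (A : X → X → ℝ) (l : List X) : 0 ≤ listCost A l := by
  unfold listCost
  induction l.zip l.tail with
  | nil => rfl
  | cons p t ih => exact le_max_of_le_right ih

lemma listCost_cons_cons (A : X → X → ℝ) (a b : X) (l : List X) :
    listCost A (a :: b :: l) = max (A a b) (listCost A (b :: l)) :=
  rfl

lemma listCost_map_le {A : X → X → ℝ} {B : Y → Y → ℝ} {φ : X → Y}
    (h : ∀ a b, B (φ a) (φ b) ≤ A a b) (l : List X) :
    listCost B (l.map φ) ≤ listCost A l := by
  induction l with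
  | nil => rfl
  | cons a t ih =>
    cases t with
    | nil => rfl
    | cons b t =>
      simp only [List.map_cons, listCost_cons_cons] at ih ⊢
      exact max_le_max (h a b) ih

lemma minChainCost_le_listCost (A : X → X → ℝ) {x x' : X} {l : List X}
    (hx : l.head? = some x) (hx' : l.getLast? = some x') :
    minChainCost A x x' ≤ listCost A l :=
  csInf_le ⟨0, by rintro _ ⟨m, -, -, rfl⟩; exact listCost_nonneg A m⟩ ⟨l, hx, hx', rfl⟩

lemma le_minChainCost (A : X → X → ℝ) {x x' : X} {c : ℝ}
    (h : ∀ l : List X, l.head? = some x → l.getLast? = some x' → c ≤ listCost A l) :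
    c ≤ minChainCost A x x' :=
  le_csInf ⟨_, [x, x'], rfl, rfl, rfl⟩ (by rintro _ ⟨l, hx, hx', rfl⟩; exact h l hx hx')

lemma minChainCost_map_le {A : X → X → ℝ} {B : Y → Y → ℝ} {φ : X → Y}
    (h : ∀ a b, B (φ a) (φ b) ≤ A a b) (x x' : X) :
    minChainCost B (φ x) (φ x') ≤ minChainCost A x x' :=
  le_minChainCost A fun l hx hx' =>
    (minChainCost_le_listCost B (by simp [hx]) (by simp [List.getLast?_map, hx'])).trans
      (listCost_map_le h l)

lemma symDis_map_le {A : X → X → ℝ} {B : Y → Y → ℝ} {φ : X → Y}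
    (h : ∀ a b, B (φ a) (φ b) ≤ A a b) (a b : X) :
    symDis B (φ a) (φ b) ≤ symDis A a b :=
  max_le_max (h a b) (h b a)

end

theorem reciprocal_axiom_of_transformation_general {X Y : Type*}
    (A_X : X → X → ℝ) (A_Y : Y → Y → ℝ)
    (φ : X → Y) (hφ : ∀ x x' : X, A_Y (φ x) (φ x') ≤ A_X x x') :
    ∀ x x' : X, uR A_Y (φ x) (φ x') ≤ uR A_X x x' :=
  minChainCost_map_le (symDis_map_le hφ)

theorem reciprocal_axiom_of_transformation {X Y : Type*} [Fintype X] [Fintype Y]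
    (A_X : X → X → ℝ) (A_Y : Y → Y → ℝ) (hX : IsNetwork A_X) (hY : IsNetwork A_Y)
    (φ : X → Y) (hφ : ∀ x x' : X, A_Y (φ x) (φ x') ≤ A_X x x') :
    ∀ x x' : X, uR A_Y (φ x) (φ x') ≤ uR A_X x x' :=
  reciprocal_axiom_of_transformation_general A_X A_Y φ hφ
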